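/- arXiv:2601.02892 — 4 statements merged into one kernel-verified Lean document; each statement's English description precedes it below -/
import Mathlib

section
/- Let G be a finite simple graph with adjacency matrix A, and let λ be an eigenvalue of A whose eigenspace has dimension ℓ > 1. Let y be an eigenvector of A with eigenvalue λ and let v_m ∈ V(G) be a vertex with y_{v_m} ≠ 0. Let Ĝ be the graph obtained from G by adding a single new vertex v̂ adjacent only to v_m. Then the eigenspace of λ for the adjacency matrix A(Ĝ) of Ĝ has dimension exactly ℓ − 1; that is, the multiplicity of λ as an eigenvalue of A(Ĝ) equals ℓ − 1. -/
open SimpleGraph Matrix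

/-- Attaching a pendant vertex at a vertex where some `lam`-eigenvector is nonzero
reduces the multiplicity of the eigenvalue `lam` by exactly one. -/
theorem pendant_vertex_reduces_multiplicity {V : Type*} [Fintype V] [DecidableEq V]
    (G : SimpleGraph V) [DecidableRel G.Adj]
    (lam : ℝ) (ℓ : ℕ) (hℓ : 1 < ℓ)
    (hdim : Module.finrank ℝ
      (Module.End.eigenspace (Matrix.toLin' (G.adjMatrix ℝ)) lam) = ℓ)
    (y : V → ℝ) (hy : y ≠ 0) (hAy : G.adjMatrix ℝ *ᵥ y = lam • y)
    (vm : V) (hvm : y vm ≠ 0)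
    -- `Ghat` is obtained from `G` by attaching a single new vertex `none` to `vm`
    (Ghat : SimpleGraph (Option V)) [DecidableRel Ghat.Adj]
    (h1 : ∀ v w : V, Ghat.Adj (some v) (some w) ↔ G.Adj v w)
    (h2 : ∀ v : V, Ghat.Adj none (some v) ↔ v = vm) :
    Module.finrank ℝ
      (Module.End.eigenspace (Matrix.toLin' (Ghat.adjMatrix ℝ)) lam) = ℓ - 1 := by
  classical
  set A : Matrix V V ℝ := G.adjMatrix ℝ with hA
  set Ah : Matrix (Option V) (Option V) ℝ := Ghat.adjMatrix ℝ with hAh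
  have hsym : Aᵀ = A := G.isSymm_adjMatrix
  -- entries of Ah
  have hEntry1 : ∀ v w : V, Ah (some v) (some w) = A v w := by
    intro v w; simp [hAh, hA, SimpleGraph.adjMatrix_apply, h1]
  have hEntry2 : ∀ w : V, Ah none (some w) = if w = vm then 1 else 0 := by
    intro w; simp [hAh, SimpleGraph.adjMatrix_apply, h2]
  have hEntry3 : ∀ v : V, Ah (some v) none = if v = vm then 1 else 0 := by
    intro v
    have hcm : Ghat.Adj (some v) none ↔ v = vm := by
      rw [Ghat.adj_comm]; exact h2 v
    simp [hAh, SimpleGraph.adjMatrix_apply, hcm]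
  have hEntry4 : Ah none none = 0 := by simp [hAh]
  -- mulVec formulas
  have hmvNone : ∀ x : Option V → ℝ, (Ah *ᵥ x) none = x (some vm) := by
    intro x
    simp [Matrix.mulVec, dotProduct, Fintype.sum_option, hEntry4, hEntry2,
      ite_mul, one_mul, zero_mul]
  have hmvSome : ∀ (x : Option V → ℝ) (v : V),
      (Ah *ᵥ x) (some v) = (if v = vm then x none else 0)
        + (A *ᵥ fun w => x (some w)) v := by
    intro x v
    simp [Matrix.mulVec, dotProduct, Fintype.sum_option, hEntry3, hEntry1,
      ite_mul, one_mul, zero_mul]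
  -- key characterisation of the hat eigenspace
  have key : ∀ x : Option V → ℝ, Ah *ᵥ x = lam • x ↔
      ((A *ᵥ fun v => x (some v)) = lam • (fun v => x (some v)) ∧ x none = 0
        ∧ x (some vm) = 0) := by
    intro x
    constructor
    · intro hx
      set z : V → ℝ := fun v => x (some v) with hz
      set c : ℝ := x none with hc
      have hnone : x (some vm) = lam * c := by
        have h := congrFun hx none
        rw [hmvNone] at h
        simpa using h
      have hsome : ∀ v, (if v = vm then c else 0) + (A *ᵥ z) v = lam * z v := by
        intro v
        have h := congrFun hx (some v)
        rw [hmvSome] at h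
        simpa using h
      have hAz : A *ᵥ z = fun v => lam * z v - (if v = vm then c else 0) := by
        funext v
        have := hsome v
        linarith [hsome v]
      have hdot1 : y ⬝ᵥ (A *ᵥ z) = lam * (y ⬝ᵥ z) := by
        rw [Matrix.dotProduct_mulVec, ← Matrix.mulVec_transpose, hsym, hAy,
          smul_dotProduct, smul_eq_mul]
      have hdot2 : y ⬝ᵥ (A *ᵥ z) = lam * (y ⬝ᵥ z) - c * y vm := by
        rw [hAz]
        simp only [dotProduct, mul_sub, Finset.sum_sub_distrib, mul_ite, mul_zero,
          Finset.sum_ite_eq', Finset.mem_univ, if_true]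
        have hs : ∑ v, y v * (lam * z v) = lam * ∑ v, y v * z v := by
          rw [Finset.mul_sum]; exact Finset.sum_congr rfl fun v _ => by ring
        rw [hs]; ring
      have hc0 : c = 0 := by
        have h0 : c * y vm = 0 := by linarith
        rcases mul_eq_zero.mp h0 with h | h
        · exact h
        · exact absurd h hvm
      refine ⟨?_, hc0, by rw [hnone, hc0, mul_zero]⟩
      funext v
      have := hsome v
      rw [hc0] at this
      simpa using this
    · rintro ⟨hz, hc, hsvm⟩
      funext i
      cases i with
      | none => simp [hmvNone, hsvm, hc]
      | some v =>
        rw [hmvSome, hc, hz]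
        simp
  -- the two eigenspaces
  set E : Submodule ℝ (V → ℝ) :=
    Module.End.eigenspace (Matrix.toLin' A) lam with hE
  set Eh : Submodule ℝ (Option V → ℝ) :=
    Module.End.eigenspace (Matrix.toLin' Ah) lam with hEh
  have memE : ∀ u : V → ℝ, u ∈ E ↔ A *ᵥ u = lam • u := by
    intro u
    rw [hE, Module.End.mem_eigenspace_iff, Matrix.toLin'_apply]
  have memEh : ∀ u : Option V → ℝ, u ∈ Eh ↔ Ah *ᵥ u = lam • u := by
    intro u
    rw [hEh, Module.End.mem_eigenspace_iff, Matrix.toLin'_apply]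
  -- the functional "evaluate at vm" on E
  set f : E →ₗ[ℝ] ℝ := (LinearMap.proj vm).comp E.subtype with hf
  have hyE : y ∈ E := (memE y).mpr hAy
  have hfsurj : Function.Surjective f := by
    intro r
    refine ⟨(r / y vm) • ⟨y, hyE⟩, ?_⟩
    simp [hf, div_mul_cancel₀ r hvm]
  have hrank : Module.finrank ℝ (LinearMap.ker f) = ℓ - 1 := by
    have h3 := LinearMap.finrank_range_add_finrank_ker f
    rw [LinearMap.range_eq_top.mpr hfsurj, finrank_top, Module.finrank_self] at h3
    have hEd : Module.finrank ℝ E = ℓ := hdim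
    omega
  -- E0 : the subspace of E vanishing at vm, as a submodule of (V → ℝ)
  set E0 : Submodule ℝ (V → ℝ) := (LinearMap.ker f).map E.subtype with hE0
  have memE0 : ∀ u : V → ℝ, u ∈ E0 ↔ (A *ᵥ u = lam • u ∧ u vm = 0) := by
    intro u
    constructor
    · rintro ⟨⟨w, hw⟩, hk, rfl⟩
      refine ⟨(memE w).mp hw, ?_⟩
      simpa [hf] using hk
    · rintro ⟨hu, hu0⟩
      exact ⟨⟨u, (memE u).mpr hu⟩, by simpa [hf] using hu0, rfl⟩
  -- linear equivalence Eh ≃ E0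
  have hrestr : ∀ x : Eh, (fun v => (x : Option V → ℝ) (some v)) ∈ E0 := by
    intro x
    obtain ⟨h1', h2', h3'⟩ := (key x).mp ((memEh x).mp x.2)
    exact (memE0 _).mpr ⟨h1', h3'⟩
  set Φ : Eh →ₗ[ℝ] E0 :=
    LinearMap.codRestrict E0 ((LinearMap.funLeft ℝ ℝ some).comp Eh.subtype) hrestr with hΦ
  have hinj : Function.Injective Φ := by
    rw [injective_iff_map_eq_zero]
    intro x hx
    have hzero : ∀ v : V, (x : Option V → ℝ) (some v) = 0 := by
      intro v
      have h' : ((Φ x : E0) : V → ℝ) = 0 := by rw [hx]; rfl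
      have := congrFun h' v
      simpa [hΦ, LinearMap.funLeft] using this
    have hc : (x : Option V → ℝ) none = 0 :=
      ((key x).mp ((memEh x).mp x.2)).2.1
    ext i
    cases i with
    | none => exact hc
    | some v => exact hzero v
  have hsurjΦ : Function.Surjective Φ := by
    rintro ⟨z, hz⟩
    obtain ⟨hz1, hz2⟩ := (memE0 z).mp hz
    set x : Option V → ℝ := fun o => o.elim 0 z with hx
    have hxEh : x ∈ Eh := by
      rw [memEh]
      exact (key x).mpr ⟨by simpa [hx] using hz1, rfl, hz2⟩
    refine ⟨⟨x, hxEh⟩, ?_⟩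
    ext v
    simp [hΦ, hx, LinearMap.funLeft]
  have hequiv : Module.finrank ℝ Eh = Module.finrank ℝ E0 :=
    (LinearEquiv.ofBijective Φ ⟨hinj, hsurjΦ⟩).finrank_eq
  rw [hequiv, hE0, Submodule.finrank_map_subtype_eq, hrank]
end

section
/- Let G be a finite simple graph with adjacency matrix A and let v_i, v_j be two distinct vertices of G. Then the characteristic polynomial of the adjacency matrix of the vertex-deleted subgraph G ∖ v_i equals that of G ∖ v_j if and only if the subspaces span{A^k(e_{v_i} + e_{v_j}) : k ≥ 0} and span{A^k(e_{v_i} − e_{v_j}) : k ≥ 0} of ℝ^{V(G)} are orthogonal to each other. -/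
open SimpleGraph Matrix Polynomial Finset

set_option linter.unusedSectionVars false

section Aux

variable {V : Type*} [Fintype V] [DecidableEq V]

lemma det_updateRow_single' {R : Type*} [CommRing R] (N : Matrix V V R) (u : V) :
    (N.updateRow u (Pi.single u 1)).det
      = (N.submatrix (Subtype.val : {x : V // x ≠ u} → V) Subtype.val).det := by
  classical
  let e : ({x : V // x ≠ u} ⊕ Unit) ≃ V :=
    { toFun := Sum.elim Subtype.val (fun _ => u)
      invFun := fun x => if h : x = u then Sum.inr () else Sum.inl ⟨x, h⟩
      left_inv := by
        rintro (⟨x, hx⟩ | ⟨⟩)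
        · simp [hx]
        · simp
      right_inv := by intro x; by_cases h : x = u <;> simp [h] }
  rw [← Matrix.det_submatrix_equiv_self e]
  have : (N.updateRow u (Pi.single u 1)).submatrix e e =
      Matrix.fromBlocks (N.submatrix (Subtype.val : {x : V // x ≠ u} → V) Subtype.val)
        (Matrix.of fun (a : {x : V // x ≠ u}) (_ : Unit) => N a.1 u) 0 1 := by
    ext a b
    rcases a with a | a
    · rcases b with b | b
      · simp [e, Matrix.updateRow_apply, a.2]
      · simp [e, Matrix.updateRow_apply, a.2]
    · rcases b with b | b
      · simp only [Matrix.submatrix_apply, Matrix.fromBlocks_apply₂₁, Matrix.zero_apply]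
        simp [e, Matrix.updateRow_apply, Pi.single_apply]
        exact fun h => absurd h.symm (Ne.symm b.2)
      · simp only [Matrix.submatrix_apply, Matrix.fromBlocks_apply₂₂]
        simp [e, Matrix.updateRow_apply, Pi.single_apply, Matrix.one_apply]
  rw [this, Matrix.det_fromBlocks_zero₂₁]
  simp

lemma deletedCharpoly_eq_adjugate' {R : Type*} [CommRing R] (A : Matrix V V R) (u : V) :
    (A.submatrix (Subtype.val : {x : V // x ≠ u} → V) Subtype.val).charpoly
      = adjugate (charmatrix A) u u := by
  classical
  rw [Matrix.adjugate_apply, det_updateRow_single']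
  unfold Matrix.charpoly
  congr 1
  ext a b
  simp only [Matrix.submatrix_apply, charmatrix_apply, Matrix.diagonal_apply]
  by_cases h : a = b
  · simp [h]
  · rw [if_neg h, if_neg (fun hv => h (Subtype.ext hv))]

/-- The Horner-type matrices appearing in the expansion of `adjugate (charmatrix A)`. -/
noncomputable def dmat (A : Matrix V V ℝ) (a : ℕ) : Matrix V V ℝ :=
  ∑ b ∈ Finset.range (Fintype.card V), A.charpoly.coeff (a + 1 + b) • A ^ b

variable (A : Matrix V V ℝ)

lemma dmat_zero [Nonempty V] : A * dmat A 0 = -(A.charpoly.coeff 0 • 1) := by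
  have hCH : ∑ i ∈ range (Fintype.card V + 1), A.charpoly.coeff i • A ^ i = 0 := by
    have := A.aeval_self_charpoly
    rwa [aeval_eq_sum_range' (n := Fintype.card V + 1)
      (by simp [A.charpoly_natDegree_eq_dim])] at this
  rw [Finset.sum_range_succ'] at hCH
  have h1 : A * dmat A 0 = ∑ b ∈ range (Fintype.card V), A.charpoly.coeff (b + 1) • A ^ (b + 1) := by
    rw [dmat, Finset.mul_sum]
    refine Finset.sum_congr rfl fun b _ => ?_
    rw [mul_smul_comm, ← pow_succ']
    try ring_nf
  rw [h1]
  have := hCH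
  simp only [pow_zero] at this
  linear_combination (norm := module) this

lemma dmat_succ [Nonempty V] (a : ℕ) :
    A * dmat A (a + 1) = dmat A a - A.charpoly.coeff (a + 1) • 1 := by
  obtain ⟨m, hm⟩ : ∃ m, Fintype.card V = m + 1 :=
    ⟨Fintype.card V - 1, by have := Fintype.card_pos (α := V); omega⟩
  have hdeg : A.charpoly.natDegree = Fintype.card V := A.charpoly_natDegree_eq_dim
  have h1 : A * dmat A (a + 1)
      = ∑ b ∈ range (Fintype.card V), A.charpoly.coeff (a + 2 + b) • A ^ (b + 1) := by
    rw [dmat, Finset.mul_sum]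
    refine Finset.sum_congr rfl fun b _ => ?_
    rw [mul_smul_comm, ← pow_succ']
    try ring_nf
  have h2 : dmat A a
      = ∑ b ∈ range m, A.charpoly.coeff (a + 2 + b) • A ^ (b + 1)
        + A.charpoly.coeff (a + 1) • 1 := by
    rw [dmat, hm, Finset.sum_range_succ']
    congr 1
    · refine Finset.sum_congr rfl fun b _ => ?_
      congr 2
      try omega
  rw [h1, h2, hm, Finset.sum_range_succ]
  have hz : A.charpoly.coeff (a + 2 + m) = 0 :=
    Polynomial.coeff_eq_zero_of_natDegree_lt (by omega)
  rw [hz]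
  simp

lemma dmat_top [Nonempty V] : dmat A (Fintype.card V - 1) = 1 := by
  obtain ⟨m, hm⟩ : ∃ m, Fintype.card V = m + 1 :=
    ⟨Fintype.card V - 1, by have := Fintype.card_pos (α := V); omega⟩
  have hdeg : A.charpoly.natDegree = Fintype.card V := A.charpoly_natDegree_eq_dim
  rw [dmat, hm]
  simp only [Nat.add_sub_cancel]
  rw [Finset.sum_range_succ']
  have hz : ∀ b ∈ range m, A.charpoly.coeff (m + 1 + (b + 1)) • A ^ (b + 1) = 0 := by
    intro b _
    rw [Polynomial.coeff_eq_zero_of_natDegree_lt (by omega), zero_smul]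
  rw [Finset.sum_congr rfl hz]
  have hmon : A.charpoly.coeff (m + 1 + 0) = 1 := by
    have := A.charpoly_monic
    simpa [hdeg, hm] using this.coeff_natDegree
  simp [hmon]

lemma map_smul_one (c : ℝ) :
    (c • (1 : Matrix V V ℝ)).map (C : ℝ → ℝ[X]) = C c • (1 : Matrix V V ℝ[X]) := by
  ext i j
  by_cases h : i = j <;> simp [Matrix.one_apply, h]

lemma mmap_sub (M N : Matrix V V ℝ) :
    (M - N).map (C : ℝ → ℝ[X]) = M.map C - N.map C := by
  ext i j; simp

lemma mmap_neg (M : Matrix V V ℝ) :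
    (-M).map (C : ℝ → ℝ[X]) = -(M.map C) := by
  ext i j; simp

lemma charmatrix_mul_dsum [Nonempty V] :
    charmatrix A * (∑ a ∈ range (Fintype.card V), (X : ℝ[X]) ^ a • (dmat A a).map C)
      = A.charpoly • (1 : Matrix V V ℝ[X]) := by
  obtain ⟨m, hm⟩ : ∃ m, Fintype.card V = m + 1 :=
    ⟨Fintype.card V - 1, by have := Fintype.card_pos (α := V); omega⟩
  set n := Fintype.card V with hn
  set S := ∑ a ∈ range n, (X : ℝ[X]) ^ a • (dmat A a).map C with hS
  have hsplit : charmatrix A * S = (X : ℝ[X]) • S - (A.map C) * S := by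
    rw [charmatrix, sub_mul, scalar_apply, ← smul_eq_diagonal_mul, RingHom.mapMatrix_apply]
  have hXS : (X : ℝ[X]) • S = ∑ a ∈ range n, (X : ℝ[X]) ^ (a + 1) • (dmat A a).map C := by
    rw [hS, Finset.smul_sum]
    exact Finset.sum_congr rfl fun a _ => by rw [smul_smul, ← pow_succ']
  have hAS : (A.map C) * S = ∑ a ∈ range n, (X : ℝ[X]) ^ a • ((A * dmat A a).map C) := by
    rw [hS, Finset.mul_sum]
    exact Finset.sum_congr rfl fun a _ => by rw [mul_smul_comm, Matrix.map_mul]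
  set E := (X : ℝ[X]) ^ (m + 1) • (1 : Matrix V V ℝ[X])
      + ∑ a ∈ range m, (C (A.charpoly.coeff (a + 1)) * (X : ℝ[X]) ^ (a + 1)) • (1 : Matrix V V ℝ[X])
      + C (A.charpoly.coeff 0) • (1 : Matrix V V ℝ[X]) with hE
  have hL : charmatrix A * S = E := by
    rw [hsplit, hXS, hAS, hm, Finset.sum_range_succ, Finset.sum_range_succ']
    have h1 : dmat A m = 1 := by
      have := dmat_top A (V := V); rwa [← hn, hm, Nat.add_sub_cancel] at this
    rw [h1]
    have h2 : ∀ a ∈ range m,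
        (X : ℝ[X]) ^ (a + 1) • ((A * dmat A (a + 1)).map C)
          = (X : ℝ[X]) ^ (a + 1) • (dmat A a).map C
            - (C (A.charpoly.coeff (a + 1)) * (X : ℝ[X]) ^ (a + 1)) • (1 : Matrix V V ℝ[X]) := by
      intro a _
      rw [dmat_succ, mmap_sub, smul_sub, map_smul_one, smul_smul, mul_comm]
    rw [Finset.sum_congr rfl h2, dmat_zero, hE]
    rw [Finset.sum_sub_distrib]
    have h3 : ((-(A.charpoly.coeff 0 • (1 : Matrix V V ℝ))).map (C : ℝ → ℝ[X]))
        = -(C (A.charpoly.coeff 0) • (1 : Matrix V V ℝ[X])) := by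
      rw [mmap_neg, map_smul_one]
    rw [pow_zero, one_smul, h3]
    rw [Matrix.map_one (C : ℝ → ℝ[X]) (by simp) (by simp)]
    abel
  have hR : A.charpoly • (1 : Matrix V V ℝ[X]) = E := by
    have hdeg : A.charpoly.natDegree = n := A.charpoly_natDegree_eq_dim
    have hp : A.charpoly = ∑ i ∈ range (n + 1), C (A.charpoly.coeff i) * X ^ i := by
      conv_lhs => rw [A.charpoly.as_sum_range' (n + 1) (by omega)]
      exact Finset.sum_congr rfl fun i _ => by rw [← C_mul_X_pow_eq_monomial]
    rw [hp, Finset.sum_smul, Finset.sum_range_succ', hm, Finset.sum_range_succ]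
    have hmon : A.charpoly.coeff (m + 1) = 1 := by
      have := A.charpoly_monic.coeff_natDegree
      rwa [hdeg, hm] at this
    rw [hmon, hE]
    simp only [C_1, one_mul, pow_zero, mul_one]
    abel
  rw [hL, hR]

lemma adjugate_charmatrix_eq [Nonempty V] :
    adjugate (charmatrix A)
      = ∑ a ∈ range (Fintype.card V), (X : ℝ[X]) ^ a • (dmat A a).map C := by
  set S := ∑ a ∈ range (Fintype.card V), (X : ℝ[X]) ^ a • (dmat A a).map C with hS
  have h2 : adjugate (charmatrix A) * (charmatrix A * S)
      = A.charpoly • adjugate (charmatrix A) := by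
    rw [charmatrix_mul_dsum, Matrix.mul_smul, mul_one]
  rw [← mul_assoc, Matrix.adjugate_mul] at h2
  have h3 : A.charpoly • S = A.charpoly • adjugate (charmatrix A) := by
    rw [← h2, Matrix.smul_mul, one_mul]
    rfl
  refine Matrix.ext fun i j => ?_
  have h4 := Matrix.ext_iff.2 h3 i j
  simp only [Matrix.smul_apply, smul_eq_mul] at h4
  exact (mul_left_cancel₀ A.charpoly_monic.ne_zero h4).symm

lemma dmat_eq_zero {t : ℕ} (ht : Fintype.card V ≤ t) : dmat A t = 0 := by
  rw [dmat]
  refine Finset.sum_eq_zero fun b _ => ?_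
  rw [Polynomial.coeff_eq_zero_of_natDegree_lt, zero_smul]
  rw [A.charpoly_natDegree_eq_dim]
  omega

lemma adjugate_charmatrix_coeff [Nonempty V] (u v : V) (t : ℕ) :
    (adjugate (charmatrix A) u v).coeff t = dmat A t u v := by
  rw [adjugate_charmatrix_eq]
  have he : (∑ a ∈ range (Fintype.card V), (X : ℝ[X]) ^ a • (dmat A a).map C) u v
      = ∑ a ∈ range (Fintype.card V), (X : ℝ[X]) ^ a * C (dmat A a u v) := by
    rw [Matrix.sum_apply]
    rfl
  rw [he, Polynomial.finset_sum_coeff]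
  have hc : ∀ a ∈ range (Fintype.card V),
      ((X : ℝ[X]) ^ a * C (dmat A a u v)).coeff t = if a = t then dmat A a u v else 0 := by
    intro a _
    rw [mul_comm, Polynomial.coeff_C_mul, Polynomial.coeff_X_pow]
    by_cases h : a = t
    · simp [h]
    · simp [h, Ne.symm h]
  rw [Finset.sum_congr rfl hc, Finset.sum_ite_eq' (range (Fintype.card V)) t]
  by_cases h : t < Fintype.card V
  · simp [h]
  · rw [if_neg (by simpa using h), dmat_eq_zero A (by omega)]
    simp

lemma dmat_entry (t : ℕ) (u v : V) :
    dmat A t u v = ∑ b ∈ range (Fintype.card V), A.charpoly.coeff (t + 1 + b) * (A ^ b) u v := by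
  rw [dmat, Matrix.sum_apply]
  rfl

lemma dmat_diag_eq_of_pow (i j : V) (h : ∀ m, (A ^ m) i i = (A ^ m) j j) (t : ℕ) :
    dmat A t i i = dmat A t j j := by
  rw [dmat_entry, dmat_entry]
  exact Finset.sum_congr rfl fun b _ => by rw [h b]

lemma pow_diag_eq_of_dmat [Nonempty V] (i j : V)
    (hd : ∀ t, dmat A t i i = dmat A t j j) (m : ℕ) :
    (A ^ m) i i = (A ^ m) j j := by
  set n := Fintype.card V with hn
  have hnpos : 0 < n := Fintype.card_pos
  have hdeg : A.charpoly.natDegree = n := A.charpoly_natDegree_eq_dim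
  set g : ℕ → ℝ := fun b => (A ^ b) i i - (A ^ b) j j with hg
  suffices hgz : ∀ m, g m = 0 by
    have := hgz m; simp only [hg] at this; linarith
  have hsum : ∀ t, ∑ b ∈ range n, A.charpoly.coeff (t + 1 + b) * g b = 0 := by
    intro t
    have := hd t
    rw [dmat_entry, dmat_entry] at this
    simp only [hg, mul_sub]
    rw [Finset.sum_sub_distrib]
    rw [← hn] at this
    rw [this, sub_self]
  have hlow : ∀ k, k < n → g k = 0 := by
    intro k
    induction k using Nat.strong_induction_on with
    | _ k IH =>
      intro hk
      have h0 := hsum (n - 1 - k)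
      have heq : ∑ b ∈ range n, A.charpoly.coeff (n - 1 - k + 1 + b) * g b = g k := by
        rw [Finset.sum_eq_single_of_mem k (Finset.mem_range.2 hk)]
        · have : n - 1 - k + 1 + k = n := by omega
          rw [this]
          have h1 : A.charpoly.coeff n = 1 := by
            have := A.charpoly_monic.coeff_natDegree; rwa [hdeg] at this
          rw [h1, one_mul]
        · intro b hb hbk
          rcases lt_or_gt_of_ne hbk with hlt | hgt
          · rw [IH b hlt (by omega), mul_zero]
          · rw [Polynomial.coeff_eq_zero_of_natDegree_lt (by rw [hdeg]; omega), zero_mul]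
      rw [heq] at h0
      exact h0
  have hCH : A ^ n = -∑ k ∈ range n, A.charpoly.coeff k • A ^ k := by
    have h := A.aeval_self_charpoly
    rw [aeval_eq_sum_range' (n := n + 1) (by omega)] at h
    rw [Finset.sum_range_succ] at h
    have h1 : A.charpoly.coeff n = 1 := by
      have := A.charpoly_monic.coeff_natDegree; rwa [hdeg] at this
    rw [h1, one_smul] at h
    linear_combination (norm := module) h
  intro m
  induction m using Nat.strong_induction_on with
  | _ m IH =>
    by_cases hm : m < n
    · exact hlow m hm
    · push_neg at hm
      have hpow : A ^ m = -∑ k ∈ range n, A.charpoly.coeff k • A ^ (m - n + k) := by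
        have : A ^ m = A ^ (m - n) * A ^ n := by
          rw [← pow_add]; congr 1; omega
        rw [this, hCH, mul_neg, Finset.mul_sum]
        congr 1
        refine Finset.sum_congr rfl fun k _ => ?_
        rw [mul_smul_comm, ← pow_add]
      have hentry : ∀ u : V, (A ^ m) u u
          = -∑ k ∈ range n, A.charpoly.coeff k * (A ^ (m - n + k)) u u := by
        intro u
        rw [hpow]
        simp [Matrix.sum_apply]
      have : g m = -∑ k ∈ range n, A.charpoly.coeff k * g (m - n + k) := by
        simp only [hg, hentry i, hentry j, mul_sub]
        rw [Finset.sum_sub_distrib]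
        ring
      rw [this, Finset.sum_eq_zero, neg_zero]
      intro k hk
      rw [IH (m - n + k) (by simp at hk; omega), mul_zero]

lemma dot_formula (hA : Aᵀ = A) (vi vj : V) (k l : ℕ) :
    ((A ^ k) *ᵥ (Pi.single vi 1 + Pi.single vj 1)) ⬝ᵥ
        ((A ^ l) *ᵥ (Pi.single vi 1 - Pi.single vj 1))
      = (A ^ (k + l)) vi vi - (A ^ (k + l)) vj vj := by
  have hsym : ∀ m : ℕ, (A ^ m)ᵀ = A ^ m := fun m => by
    rw [Matrix.transpose_pow, hA]
  have h1 : (A ^ k) *ᵥ (Pi.single vi 1 + Pi.single vj 1)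
      = (Pi.single vi 1 + Pi.single vj 1) ᵥ* (A ^ k) := by
    rw [← Matrix.mulVec_transpose, hsym]
  rw [h1, ← Matrix.dotProduct_mulVec, Matrix.mulVec_mulVec, ← pow_add]
  have hoff : (A ^ (k + l)) vi vj = (A ^ (k + l)) vj vi := by
    conv_lhs => rw [← hsym (k + l)]
    rfl
  simp only [Matrix.mulVec_sub, Matrix.mulVec_single_one, Matrix.col_apply, add_dotProduct, sub_dotProduct,
    single_dotProduct, dotProduct_sub, Pi.sub_apply, mul_one, one_mul]
  rw [hoff]
  ring

lemma orth_iff_traces (hA : Aᵀ = A) (vi vj : V) :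
    (∀ x ∈ Submodule.span ℝ
        {z : V → ℝ | ∃ k : ℕ, z = (A ^ k) *ᵥ (Pi.single vi 1 + Pi.single vj 1)},
      ∀ y ∈ Submodule.span ℝ
        {z : V → ℝ | ∃ k : ℕ, z = (A ^ k) *ᵥ (Pi.single vi 1 - Pi.single vj 1)},
        x ⬝ᵥ y = 0)
      ↔ ∀ m : ℕ, (A ^ m) vi vi = (A ^ m) vj vj := by
  constructor
  · intro h m
    have h1 := h _ (Submodule.subset_span ⟨0, rfl⟩) _ (Submodule.subset_span ⟨m, rfl⟩)
    rw [dot_formula A hA vi vj 0 m, zero_add] at h1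
    linarith
  · intro h x hx y hy
    induction hx using Submodule.span_induction with
    | mem x hxm =>
      induction hy using Submodule.span_induction with
      | mem y hym =>
        obtain ⟨k, rfl⟩ := hxm
        obtain ⟨l, rfl⟩ := hym
        rw [dot_formula A hA vi vj k l, h (k + l), sub_self]
      | zero => simp
      | add y z hy' hz' ihy ihz => rw [dotProduct_add, ihy, ihz, add_zero]
      | smul c y hy' ihy => rw [dotProduct_smul, ihy, smul_zero]
    | zero => simp
    | add x z hx' hz' ihx ihz => rw [add_dotProduct, ihx, ihz, add_zero]
    | smul c x hx' ihx => rw [smul_dotProduct, ihx, smul_zero]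

end Aux

/-- The characteristic polynomial of the adjacency matrix of the vertex-deleted
subgraph `X ∖ u`, i.e. of the principal submatrix of `A` obtained by removing the row
and column of `u`. -/
noncomputable def deletedCharpoly {α : Type*} [Fintype α] [DecidableEq α]
    (A : Matrix α α ℝ) (u : α) : Polynomial ℝ :=
  (A.submatrix (Subtype.val : {x : α // x ≠ u} → α)
    (Subtype.val : {x : α // x ≠ u} → α)).charpoly

/-- Two distinct vertices have cospectral vertex-deleted subgraphs if and only if the
subspaces generated by `e_{v_i} + e_{v_j}` and `e_{v_i} - e_{v_j}` under the action of
the adjacency matrix are orthogonal. -/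
theorem cospectral_iff_orthogonal_subspaces {V : Type*} [Fintype V] [DecidableEq V]
    (G : SimpleGraph V) [DecidableRel G.Adj] (vi vj : V) (hne : vi ≠ vj) :
    deletedCharpoly (G.adjMatrix ℝ) vi = deletedCharpoly (G.adjMatrix ℝ) vj ↔
      (∀ x ∈ Submodule.span ℝ
          {z : V → ℝ | ∃ k : ℕ, z = (G.adjMatrix ℝ ^ k) *ᵥ (Pi.single vi 1 + Pi.single vj 1)},
        ∀ y ∈ Submodule.span ℝ
          {z : V → ℝ | ∃ k : ℕ, z = (G.adjMatrix ℝ ^ k) *ᵥ (Pi.single vi 1 - Pi.single vj 1)},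
          x ⬝ᵥ y = 0) := by
  haveI : Nonempty V := ⟨vi⟩
  set A := G.adjMatrix ℝ with hAdef
  have hA : Aᵀ = A := G.transpose_adjMatrix
  have key : deletedCharpoly A vi = deletedCharpoly A vj
      ↔ ∀ t, dmat A t vi vi = dmat A t vj vj := by
    rw [deletedCharpoly, deletedCharpoly,
      deletedCharpoly_eq_adjugate', deletedCharpoly_eq_adjugate', Polynomial.ext_iff]
    constructor
    · intro h t
      have := h t
      rwa [adjugate_charmatrix_coeff, adjugate_charmatrix_coeff] at this
    · intro h t
      rw [adjugate_charmatrix_coeff, adjugate_charmatrix_coeff]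
      exact h t
  rw [key, orth_iff_traces A hA vi vj]
  exact ⟨fun h m => pow_diag_eq_of_dmat A vi vj h m,
    fun h t => dmat_diag_eq_of_pow A vi vj h t⟩
end

section
/- Let G be a finite simple graph with adjacency matrix A and let v_i, v_j be two distinct vertices of G. Then (A^k)_{v_i, v_i} = (A^k)_{v_j, v_j} for all natural numbers k if and only if the subspaces span{A^k(e_{v_i} + e_{v_j}) : k ≥ 0} and span{A^k(e_{v_i} − e_{v_j}) : k ≥ 0} of ℝ^{V(G)} are orthogonal to each other. -/
open SimpleGraph Matrix

private lemma key_dot {V : Type*} [Fintype V] [DecidableEq V]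
    (G : SimpleGraph V) [DecidableRel G.Adj] (vi vj : V) (k l : ℕ) :
    ((G.adjMatrix ℝ ^ k) *ᵥ (Pi.single vi 1 + Pi.single vj 1)) ⬝ᵥ
      ((G.adjMatrix ℝ ^ l) *ᵥ (Pi.single vi 1 - Pi.single vj 1)) =
    (G.adjMatrix ℝ ^ (k + l)) vi vi - (G.adjMatrix ℝ ^ (k + l)) vj vj := by
  have hsk : ((G.adjMatrix ℝ) ^ k).IsSymm := G.isSymm_adjMatrix.pow k
  have hskl : ((G.adjMatrix ℝ) ^ (k + l)).IsSymm := G.isSymm_adjMatrix.pow (k + l)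
  have h1 : (G.adjMatrix ℝ ^ k) *ᵥ (Pi.single vi 1 + Pi.single vj 1)
      = (Pi.single vi 1 + Pi.single vj 1) ᵥ* (G.adjMatrix ℝ ^ k) := by
    rw [← mulVec_transpose, hsk.eq]
  rw [h1, ← dotProduct_mulVec, mulVec_mulVec, ← pow_add]
  have hcross : (G.adjMatrix ℝ ^ (k + l)) vi vj = (G.adjMatrix ℝ ^ (k + l)) vj vi :=
    hskl.apply vj vi
  simp [mulVec_sub, mulVec_single, add_dotProduct, dotProduct_sub, single_dotProduct,
    dotProduct_single, hcross]
  ring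

/-- Two distinct vertices satisfy `(A^k)_{v_i,v_i} = (A^k)_{v_j,v_j}` for all `k` if and
only if the subspaces generated by `e_{v_i} + e_{v_j}` and `e_{v_i} - e_{v_j}` under the
action of the adjacency matrix are orthogonal. -/
theorem diagonal_powers_iff_orthogonal_subspaces {V : Type*} [Fintype V] [DecidableEq V]
    (G : SimpleGraph V) [DecidableRel G.Adj] (vi vj : V) (hne : vi ≠ vj) :
    (∀ k : ℕ, (G.adjMatrix ℝ ^ k) vi vi = (G.adjMatrix ℝ ^ k) vj vj) ↔
      (∀ x ∈ Submodule.span ℝ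
          {z : V → ℝ | ∃ k : ℕ, z = (G.adjMatrix ℝ ^ k) *ᵥ (Pi.single vi 1 + Pi.single vj 1)},
        ∀ y ∈ Submodule.span ℝ
          {z : V → ℝ | ∃ k : ℕ, z = (G.adjMatrix ℝ ^ k) *ᵥ (Pi.single vi 1 - Pi.single vj 1)},
          x ⬝ᵥ y = 0) := by
  constructor
  · intro h x hx y hy
    induction hx using Submodule.span_induction with
    | mem x hxm =>
      induction hy using Submodule.span_induction with
      | mem y hym =>
        obtain ⟨k, rfl⟩ := hxm
        obtain ⟨l, rfl⟩ := hym
        rw [key_dot, h (k + l), sub_self]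
      | zero => simp
      | add y₁ y₂ _ _ h1 h2 => rw [dotProduct_add, h1, h2, add_zero]
      | smul a y _ h1 => rw [dotProduct_smul, h1, smul_zero]
    | zero => simp
    | add x₁ x₂ _ _ h1 h2 => rw [add_dotProduct, h1, h2, add_zero]
    | smul a x _ h1 => rw [smul_dotProduct, h1, smul_zero]
  · intro h k
    have h0 := h _ (Submodule.subset_span ⟨k, rfl⟩) _ (Submodule.subset_span ⟨0, rfl⟩)
    rw [key_dot] at h0
    simpa using sub_eq_zero.mp h0
end

section
/- Let G be a finite simple graph with adjacency matrix A and let v_i, v_j be two distinct vertices of G. Then the characteristic polynomial of the adjacency matrix of the vertex-deleted subgraph G ∖ v_i equals that of G ∖ v_j if and only if for every eigenvalue λ of A, the orthogonal projection E_λ onto the λ-eigenspace of A satisfies (E_λ)_{v_i, v_i} = (E_λ)_{v_j, v_j}. -/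
open SimpleGraph Matrix

/-- `P` is the orthogonal projection of `ℝ^α` onto the `lam`-eigenspace of `A`. -/
def IsEigProjection {α : Type*} [Fintype α] (A : Matrix α α ℝ) (lam : ℝ)
    (P : Matrix α α ℝ) : Prop :=
  P.IsSymm ∧ P * P = P ∧
  (∀ x : α → ℝ, A *ᵥ (P *ᵥ x) = lam • (P *ᵥ x)) ∧
  (∀ x : α → ℝ, A *ᵥ x = lam • x → P *ᵥ x = x)

section Aux

variable {V : Type*} [Fintype V] [DecidableEq V]

private lemma my_adjugate_diag {R : Type*} [CommRing R]
    (M : Matrix V V R) (u : V) :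
    M.adjugate u u =
      (M.submatrix (Subtype.val : {x : V // x ≠ u} → V) Subtype.val).det := by
  rw [Matrix.adjugate_apply]
  let e : {x : V // x = u} ⊕ {x : V // ¬ x = u} ≃ V := Equiv.sumCompl (· = u)
  rw [← Matrix.det_submatrix_equiv_self e]
  have he : (M.updateRow u (Pi.single u 1)).submatrix e e =
      Matrix.fromBlocks 1 0
        (Matrix.of fun (a : {x : V // ¬ x = u}) (_ : {x : V // x = u}) => M a.val u)
        (M.submatrix Subtype.val Subtype.val) := by
    ext i j
    cases i with
    | inl a =>
      cases j with
      | inl b =>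
        have hab : a = b := Subtype.ext (a.2.trans b.2.symm)
        simp [e, Equiv.sumCompl, a.2, b.2, Matrix.updateRow_self, Pi.single_apply, hab,
          Matrix.one_apply]
      | inr b =>
        simp [e, Equiv.sumCompl, a.2, Matrix.updateRow_self, Pi.single_apply, b.2]
    | inr a =>
      cases j with
      | inl b =>
        simp [e, Equiv.sumCompl, Matrix.updateRow_ne a.2, b.2]
      | inr b =>
        simp [e, Equiv.sumCompl, Matrix.updateRow_ne a.2]
  rw [he, Matrix.det_fromBlocks_zero₁₂]
  simp

private lemma my_eval_charpoly {n : Type*} [Fintype n] [DecidableEq n] {R : Type*} [CommRing R]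
    (M : Matrix n n R) (t : R) :
    (M.charpoly).eval t = (t • (1 : Matrix n n R) - M).det := by
  rw [Matrix.charpoly, ← Polynomial.coe_evalRingHom, RingHom.map_det]
  congr 1
  ext i j
  by_cases h : i = j
  · subst h
    simp [Matrix.charmatrix_apply_eq, Matrix.one_apply]
  · simp [Matrix.charmatrix_apply_ne _ _ _ h, Matrix.one_apply, h]

private lemma my_eval_deleted (A : Matrix V V ℝ) (u : V) (t : ℝ) :
    (deletedCharpoly A u).eval t = ((t • (1 : Matrix V V ℝ) - A).submatrix
      (Subtype.val : {x : V // x ≠ u} → V) Subtype.val).det := by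
  rw [deletedCharpoly, my_eval_charpoly]
  congr 1
  ext i j
  by_cases h : i = j
  · subst h
    simp [Matrix.one_apply]
  · have h' : (i : V) ≠ (j : V) := fun hh => h (Subtype.ext hh)
    simp [Matrix.one_apply, h, h']

private lemma my_entry (U : Matrix V V ℝ) (h : V → ℝ) (u : V) :
    (U * Matrix.diagonal h * star U) u u = ∑ i, h i * (U u i)^2 := by
  rw [Matrix.mul_apply]
  refine Finset.sum_congr rfl fun i _ => ?_
  rw [Matrix.mul_diagonal]
  have : (star U) i u = U u i := by
    rw [Matrix.star_eq_conjTranspose, Matrix.conjTranspose_apply, star_trivial]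
  rw [this]
  ring

private lemma my_adj_conj (U : Matrix V V ℝ) (hUU : U * star U = 1) (hU'U : star U * U = 1)
    (g : V → ℝ) :
    (U * Matrix.diagonal g * star U).adjugate =
      U * Matrix.diagonal (fun i => ∏ j ∈ Finset.univ.erase i, g j) * star U := by
  have hadjU : Matrix.adjugate U = U.det • star U := by
    calc Matrix.adjugate U = (star U * U) * Matrix.adjugate U := by rw [hU'U, one_mul]
    _ = star U * (U * Matrix.adjugate U) := by rw [Matrix.mul_assoc]
    _ = star U * (U.det • 1) := by rw [Matrix.mul_adjugate]
    _ = U.det • star U := by rw [Matrix.mul_smul, mul_one]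
  have hadjsU : Matrix.adjugate (star U) = (star U).det • U := by
    calc Matrix.adjugate (star U) = (U * star U) * Matrix.adjugate (star U) := by
          rw [hUU, one_mul]
    _ = U * (star U * Matrix.adjugate (star U)) := by rw [Matrix.mul_assoc]
    _ = U * ((star U).det • 1) := by rw [Matrix.mul_adjugate]
    _ = (star U).det • U := by rw [Matrix.mul_smul, mul_one]
  have hdet : (star U).det * U.det = 1 := by
    rw [← Matrix.det_mul, hU'U, Matrix.det_one]
  rw [Matrix.adjugate_mul_distrib, Matrix.adjugate_mul_distrib, Matrix.adjugate_diagonal,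
    hadjU, hadjsU]
  simp only [Matrix.mul_smul, Matrix.smul_mul, smul_smul, Matrix.mul_assoc]
  rw [mul_comm U.det, hdet, one_smul]

private lemma my_proj (A U : Matrix V V ℝ) (μ : V → ℝ) (hUU : U * star U = 1)
    (hU'U : star U * U = 1) (hspec : A = U * Matrix.diagonal μ * star U) (lam : ℝ) :
    IsEigProjection A lam
      (U * Matrix.diagonal (fun i => if μ i = lam then (1:ℝ) else 0) * star U) := by
  set d : V → ℝ := fun i => if μ i = lam then (1:ℝ) else 0 with hd
  set P := U * Matrix.diagonal d * star U with hP
  have hsUT : star U = Uᵀ := by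
    rw [Matrix.star_eq_conjTranspose, Matrix.conjTranspose_eq_transpose_of_trivial]
  refine ⟨?_, ?_, ?_, ?_⟩
  · show Pᵀ = P
    rw [hP, hsUT, Matrix.transpose_mul, Matrix.transpose_mul, Matrix.transpose_transpose,
      Matrix.diagonal_transpose, Matrix.mul_assoc]
  · rw [hP]
    calc (U * Matrix.diagonal d * star U) * (U * Matrix.diagonal d * star U)
        = U * Matrix.diagonal d * (star U * U) * (Matrix.diagonal d * star U) := by
          simp only [Matrix.mul_assoc]
      _ = U * (Matrix.diagonal d * Matrix.diagonal d) * star U := by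
          rw [hU'U]; simp only [Matrix.mul_one, Matrix.mul_assoc]
      _ = U * Matrix.diagonal d * star U := by
          rw [Matrix.diagonal_mul_diagonal]
          have hdd : (fun i => d i * d i) = d := by
            funext i; by_cases h : μ i = lam <;> simp [hd, h]
          rw [hdd]
  · intro x
    have hAP : A * P = lam • P := by
      rw [hspec, hP]
      calc (U * Matrix.diagonal μ * star U) * (U * Matrix.diagonal d * star U)
          = U * Matrix.diagonal μ * (star U * U) * (Matrix.diagonal d * star U) := by
            simp only [Matrix.mul_assoc]
        _ = U * (Matrix.diagonal μ * Matrix.diagonal d) * star U := by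
            rw [hU'U]; simp only [Matrix.mul_one, Matrix.mul_assoc]
        _ = U * (lam • Matrix.diagonal d) * star U := by
            rw [Matrix.diagonal_mul_diagonal, ← Matrix.diagonal_smul]
            have hdd : (fun i => μ i * d i) = lam • d := by
              funext i
              by_cases h : μ i = lam <;> simp [hd, h, Pi.smul_apply]
            rw [hdd]
        _ = lam • (U * Matrix.diagonal d * star U) := by
            simp only [Matrix.mul_smul, Matrix.smul_mul]
    rw [Matrix.mulVec_mulVec, hAP, Matrix.smul_mulVec]
  · intro x hx
    set y := star U *ᵥ x with hy
    have hxy : U *ᵥ y = x := by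
      rw [hy, Matrix.mulVec_mulVec, hUU, Matrix.one_mulVec]
    have hDy : Matrix.diagonal μ *ᵥ y = lam • y := by
      have h1 : star U *ᵥ (A *ᵥ x) = Matrix.diagonal μ *ᵥ y := by
        rw [hspec]
        simp only [Matrix.mulVec_mulVec, Matrix.mul_assoc]
        rw [← Matrix.mul_assoc (star U) U, hU'U, Matrix.one_mul, ← Matrix.mulVec_mulVec]
      have h2 : star U *ᵥ (lam • x) = lam • y := by
        rw [Matrix.mulVec_smul]
      rw [← h1, hx, h2]
    have hDd : Matrix.diagonal d *ᵥ y = y := by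
      funext i
      rw [Matrix.mulVec_diagonal]
      by_cases h : μ i = lam
      · simp [hd, h]
      · have hmul : μ i * y i = lam * y i := by
          have := congrFun hDy i
          rwa [Matrix.mulVec_diagonal] at this
        have hyi : y i = 0 := by
          by_contra hyi
          exact h (mul_right_cancel₀ hyi hmul)
        simp [hd, h, hyi]
    rw [hP, ← Matrix.mulVec_mulVec, ← Matrix.mulVec_mulVec, ← hy, hDd, hxy]

private lemma my_eig_mem (A U : Matrix V V ℝ) (μ : V → ℝ) (hUU : U * star U = 1)
    (hU'U : star U * U = 1) (hspec : A = U * Matrix.diagonal μ * star U) (lam : ℝ)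
    (x : V → ℝ) (hx0 : x ≠ 0) (hx : A *ᵥ x = lam • x) : ∃ i, μ i = lam := by
  set y := star U *ᵥ x with hy
  have hxy : U *ᵥ y = x := by
    rw [hy, Matrix.mulVec_mulVec, hUU, Matrix.one_mulVec]
  have hy0 : y ≠ 0 := by
    intro h
    apply hx0
    rw [← hxy, h, Matrix.mulVec_zero]
  have hDy : Matrix.diagonal μ *ᵥ y = lam • y := by
    have h1 : star U *ᵥ (A *ᵥ x) = Matrix.diagonal μ *ᵥ y := by
      rw [hspec]
      simp only [Matrix.mulVec_mulVec, Matrix.mul_assoc]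
      rw [← Matrix.mul_assoc (star U) U, hU'U, Matrix.one_mul, ← Matrix.mulVec_mulVec]
    have h2 : star U *ᵥ (lam • x) = lam • y := by rw [Matrix.mulVec_smul]
    rw [← h1, hx, h2]
  obtain ⟨i, hi⟩ := Function.ne_iff.mp hy0
  refine ⟨i, ?_⟩
  have hmul : μ i * y i = lam * y i := by
    have := congrFun hDy i
    rwa [Matrix.mulVec_diagonal] at this
  exact mul_right_cancel₀ hi hmul

private lemma my_uniq (A : Matrix V V ℝ) (lam : ℝ) (P Q : Matrix V V ℝ)
    (hP : IsEigProjection A lam P) (hQ : IsEigProjection A lam Q) : P = Q := by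
  obtain ⟨hPs, -, hPe, hPf⟩ := hP
  obtain ⟨hQs, -, hQe, hQf⟩ := hQ
  have hext : ∀ M N : Matrix V V ℝ, (∀ x, M *ᵥ x = N *ᵥ x) → M = N := by
    intro M N h
    ext u w
    have := congrFun (h (Pi.single w 1)) u
    simpa [Matrix.mulVec_single] using this
  have h1 : Q * P = P := by
    apply hext
    intro x
    rw [← Matrix.mulVec_mulVec]
    exact hQf _ (hPe x)
  have h2 : P * Q = Q := by
    apply hext
    intro x
    rw [← Matrix.mulVec_mulVec]
    exact hPf _ (hQe x)
  have h3 : P * Q = P := by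
    have := congrArg Matrix.transpose h1
    rwa [Matrix.transpose_mul, hPs, hQs] at this
  rw [← h3, h2]

end Aux

/-- Two distinct vertices have cospectral vertex-deleted subgraphs if and only if for
every eigenvalue of the adjacency matrix the corresponding orthogonal eigenprojection
has equal diagonal entries at the two vertices. -/
theorem cospectral_iff_eigProjection_diagonal {V : Type*} [Fintype V] [DecidableEq V]
    (G : SimpleGraph V) [DecidableRel G.Adj] (vi vj : V) (hne : vi ≠ vj) :
    deletedCharpoly (G.adjMatrix ℝ) vi = deletedCharpoly (G.adjMatrix ℝ) vj ↔
      (∀ (lam : ℝ) (P : Matrix V V ℝ),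
        (∃ x : V → ℝ, x ≠ 0 ∧ G.adjMatrix ℝ *ᵥ x = lam • x) →
        IsEigProjection (G.adjMatrix ℝ) lam P →
        P vi vi = P vj vj) := by
  set A := G.adjMatrix ℝ with hAdef
  have hA : A.IsHermitian := by
    rw [Matrix.IsHermitian, Matrix.conjTranspose_eq_transpose_of_trivial]
    exact G.isSymm_adjMatrix
  set U : Matrix V V ℝ := (hA.eigenvectorUnitary : Matrix V V ℝ) with hUdef
  set μ : V → ℝ := hA.eigenvalues with hμdef
  have hUU : U * star U = 1 := Matrix.mem_unitaryGroup_iff.mp hA.eigenvectorUnitary.2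
  have hU'U : star U * U = 1 := Matrix.mem_unitaryGroup_iff'.mp hA.eigenvectorUnitary.2
  have hspec : A = U * Matrix.diagonal μ * star U := hA.spectral_theorem
  have hcol : ∀ i, A *ᵥ (fun u => U u i) = μ i • (fun u => U u i) :=
    fun i => hA.mulVec_eigenvectorBasis i
  have hcolne : ∀ i, (fun u => U u i) ≠ (0 : V → ℝ) := by
    intro i h
    exact hA.eigenvectorBasis.orthonormal.ne_zero i (by ext u; exact congrFun h u)
  -- the key evaluation formula
  have key : ∀ (u : V) (t : ℝ), (deletedCharpoly A u).eval t =
      ∑ i, (∏ j ∈ Finset.univ.erase i, (t - μ j)) * (U u i)^2 := by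
    intro u t
    have h1 : t • (1 : Matrix V V ℝ) - A = U * Matrix.diagonal (fun i => t - μ i) * star U := by
      have hdiag : Matrix.diagonal (fun i => t - μ i) =
          t • (1 : Matrix V V ℝ) - Matrix.diagonal μ := by
        rw [Matrix.smul_one_eq_diagonal, ← Matrix.diagonal_sub]
      rw [hdiag, Matrix.mul_sub, Matrix.sub_mul, Matrix.mul_smul, Matrix.mul_one,
        Matrix.smul_mul, hUU, hspec]
    rw [my_eval_deleted, ← my_adjugate_diag, h1, my_adj_conj U hUU hU'U, my_entry]
  set S : Finset ℝ := Finset.univ.image μ with hS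
  set c : ℝ → V → ℝ :=
    fun lam u => ∑ i ∈ Finset.univ.filter (fun i => μ i = lam), (U u i)^2 with hc
  have hPcEntry : ∀ (lam : ℝ) (u : V),
      (U * Matrix.diagonal (fun i => if μ i = lam then (1:ℝ) else 0) * star U) u u = c lam u := by
    intro lam u
    rw [my_entry]
    simp only [hc]
    rw [Finset.sum_filter]
    refine Finset.sum_congr rfl fun i _ => ?_
    by_cases h : μ i = lam <;> simp [h]
  -- fiberwise summation
  have hfib : ∀ (w : V → ℝ) (t : ℝ),
      ∑ lam ∈ S, (t - lam)⁻¹ * (∑ i ∈ Finset.univ.filter (fun i => μ i = lam), w i) =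
        ∑ i, (t - μ i)⁻¹ * w i := by
    intro w t
    rw [← Finset.sum_fiberwise_of_maps_to (fun x _ => Finset.mem_image_of_mem μ (Finset.mem_univ x))
      (fun i => (t - μ i)⁻¹ * w i)]
    refine Finset.sum_congr rfl fun lam _ => ?_
    rw [Finset.mul_sum]
    refine Finset.sum_congr rfl fun i hi => ?_
    rw [(Finset.mem_filter.mp hi).2]
  have keyinv : ∀ (w : V → ℝ) (t : ℝ), (∀ i, t ≠ μ i) →
      ∑ i, (∏ j ∈ Finset.univ.erase i, (t - μ j)) * w i =
        (∏ j, (t - μ j)) *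
          ∑ lam ∈ S, (t - lam)⁻¹ * (∑ i ∈ Finset.univ.filter (fun i => μ i = lam), w i) := by
    intro w t ht
    rw [hfib, Finset.mul_sum]
    refine Finset.sum_congr rfl fun i _ => ?_
    have h0 : t - μ i ≠ 0 := sub_ne_zero.mpr (ht i)
    rw [← Finset.mul_prod_erase Finset.univ (fun j => t - μ j) (Finset.mem_univ i),
      mul_comm (t - μ i), mul_assoc, mul_inv_cancel_left₀ h0]
  have hφne : ∀ t : ℝ, (∀ i, t ≠ μ i) → (∏ j, (t - μ j)) ≠ 0 := by
    intro t ht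
    exact Finset.prod_ne_zero_iff.mpr fun j _ => sub_ne_zero.mpr (ht j)
  have hinf : ∀ q : Polynomial ℝ, (∀ t : ℝ, (∀ i, t ≠ μ i) → q.eval t = 0) → q = 0 := by
    intro q hq
    apply Polynomial.eq_zero_of_infinite_isRoot
    apply Set.Infinite.mono (s := Set.univ \ Set.range μ)
    · intro t ht
      exact hq t fun i h => ht.2 ⟨i, h.symm⟩
    · exact Set.infinite_univ.diff (Set.finite_range μ)
  constructor
  · -- forward direction
    intro hdel lam P hex hproj
    obtain ⟨x, hx0, hxe⟩ := hex
    obtain ⟨i0, hi0⟩ := my_eig_mem A U μ hUU hU'U hspec lam x hx0 hxe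
    have hlamS : lam ∈ S := Finset.mem_image.mpr ⟨i0, Finset.mem_univ i0, hi0⟩
    set w : V → ℝ := fun i => (U vi i)^2 - (U vj i)^2 with hwdef
    set cw : ℝ → ℝ := fun l => ∑ i ∈ Finset.univ.filter (fun i => μ i = l), w i with hcw
    have hw : ∀ t : ℝ, ∑ i, (∏ j ∈ Finset.univ.erase i, (t - μ j)) * w i = 0 := by
      intro t
      have hev := congrArg (Polynomial.eval t) hdel
      rw [key vi t, key vj t] at hev
      simp only [hwdef, mul_sub]
      rw [Finset.sum_sub_distrib, hev, sub_self]
    set p : Polynomial ℝ := ∑ lam' ∈ S, Polynomial.C (cw lam') *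
      ∏ lam'' ∈ S.erase lam', (Polynomial.X - Polynomial.C lam'') with hpdef
    have hpeval : ∀ t : ℝ, p.eval t =
        ∑ lam' ∈ S, cw lam' * ∏ lam'' ∈ S.erase lam', (t - lam'') := by
      intro t
      rw [hpdef]
      simp [Polynomial.eval_finset_sum, Polynomial.eval_prod]
    have hp0 : p = 0 := by
      apply hinf
      intro t ht
      have htS : ∀ l ∈ S, t ≠ l := by
        intro l hl
        obtain ⟨i, -, hi⟩ := Finset.mem_image.mp hl
        rw [← hi]
        exact ht i
      have hsum0 : ∑ lam' ∈ S, (t - lam')⁻¹ * cw lam' = 0 := by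
        have := hw t
        rw [keyinv w t ht] at this
        rcases mul_eq_zero.mp this with h | h
        · exact absurd h (hφne t ht)
        · exact h
      rw [hpeval]
      calc ∑ lam' ∈ S, cw lam' * ∏ lam'' ∈ S.erase lam', (t - lam'')
          = ∑ lam' ∈ S, (∏ l ∈ S, (t - l)) * ((t - lam')⁻¹ * cw lam') := by
            refine Finset.sum_congr rfl fun lam' hl => ?_
            have h0 : t - lam' ≠ 0 := sub_ne_zero.mpr (htS lam' hl)
            rw [← Finset.mul_prod_erase S (fun l => t - l) hl,
              mul_comm (t - lam'), mul_assoc, mul_inv_cancel_left₀ h0, mul_comm]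
        _ = (∏ l ∈ S, (t - l)) * ∑ lam' ∈ S, (t - lam')⁻¹ * cw lam' := by
            rw [Finset.mul_sum]
        _ = 0 := by rw [hsum0, mul_zero]
    have hcw0 : cw lam = 0 := by
      have hev := congrArg (Polynomial.eval lam) hp0
      rw [hpeval, Polynomial.eval_zero] at hev
      have hsingle : ∑ lam' ∈ S, cw lam' * ∏ lam'' ∈ S.erase lam', (lam - lam'') =
          cw lam * ∏ lam'' ∈ S.erase lam, (lam - lam'') := by
        refine Finset.sum_eq_single_of_mem lam hlamS fun l hl hlne => ?_
        have : lam ∈ S.erase l := Finset.mem_erase.mpr ⟨fun h => hlne h.symm, hlamS⟩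
        rw [Finset.prod_eq_zero this (by ring), mul_zero]
      rw [hsingle] at hev
      have hprodne : (∏ lam'' ∈ S.erase lam, (lam - lam'')) ≠ 0 :=
        Finset.prod_ne_zero_iff.mpr fun l hl =>
          sub_ne_zero.mpr fun h => (Finset.mem_erase.mp hl).1 h.symm
      exact (mul_eq_zero.mp hev).resolve_right hprodne
    have hceq : c lam vi = c lam vj := by
      have : cw lam = c lam vi - c lam vj := by
        simp only [hcw, hc, hwdef]
        rw [Finset.sum_sub_distrib]
      rw [this] at hcw0
      linarith
    have hPeq : P = U * Matrix.diagonal (fun i => if μ i = lam then (1:ℝ) else 0) * star U :=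
      my_uniq A lam _ _ hproj (my_proj A U μ hUU hU'U hspec lam)
    rw [hPeq, hPcEntry, hPcEntry, hceq]
  · -- backward direction
    intro h
    have hceq : ∀ lam ∈ S, c lam vi = c lam vj := by
      intro lam hlam
      obtain ⟨i0, -, hi0⟩ := Finset.mem_image.mp hlam
      have hx := h lam (U * Matrix.diagonal (fun i => if μ i = lam then (1:ℝ) else 0) * star U)
        ⟨(fun u => U u i0), hcolne i0, hi0 ▸ hcol i0⟩ (my_proj A U μ hUU hU'U hspec lam)
      rwa [hPcEntry, hPcEntry] at hx
    have hdiff : deletedCharpoly A vi - deletedCharpoly A vj = 0 := by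
      apply hinf
      intro t ht
      rw [Polynomial.eval_sub, key vi t, key vj t,
        keyinv (fun i => (U vi i)^2) t ht, keyinv (fun i => (U vj i)^2) t ht]
      have : ∀ u : V, ∑ lam ∈ S, (t - lam)⁻¹ *
          (∑ i ∈ Finset.univ.filter (fun i => μ i = lam), (U u i)^2) =
          ∑ lam ∈ S, (t - lam)⁻¹ * c lam u := by
        intro u
        rfl
      rw [this vi, this vj]
      have hsums : ∑ lam ∈ S, (t - lam)⁻¹ * c lam vi = ∑ lam ∈ S, (t - lam)⁻¹ * c lam vj :=
        Finset.sum_congr rfl fun lam hl => by rw [hceq lam hl]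
      rw [hsums, sub_self]
    have := sub_eq_zero.mp hdiff
    exact this
end
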